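/- arXiv:1901.10317 — 3 statements merged into one kernel-verified Lean document; each statement's English description precedes it below -/
import Mathlib

section
/- Let u, v ∈ ℚ[x,y] be nonzero polynomials of positive total degree with gcd(u,v) = 1. Then for all but finitely many s ∈ ℚ, the sheared polynomials u(x+sy, y) and v(x+sy, y) are in generic position with respect to y. -/
/-!
STATEMENT 5: For nonzero `u, v ∈ ℚ[x,y]` of positive total degree with
`gcd(u,v) = 1`, for all but finitely many `s ∈ ℚ` the sheared polynomials
`u(x+sy, y)` and `v(x+sy, y)` are in generic position w.r.t. `y`.

`ℚ[x,y]` is represented as `Polynomial (Polynomial ℚ)`, `x` inner and `y` outer.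
-/

open Polynomial

abbrev R2 : Type := Polynomial (Polynomial ℚ)

/-- The total degree of a bivariate polynomial `h ∈ ℚ[x][y]`. -/
noncomputable def totalDeg2 (h : R2) : ℕ :=
  h.support.sup fun i => i + (h.coeff i).natDegree

/-- The Sylvester matrix of two univariate polynomials over a commutative ring. -/
noncomputable def sylvesterMatrix {A : Type*} [CommRing A] (f g : Polynomial A) :
    Matrix (Fin (g.natDegree + f.natDegree)) (Fin (g.natDegree + f.natDegree)) A :=
  fun i j =>
    if (i : ℕ) < g.natDegree then
      (if (i : ℕ) ≤ (j : ℕ) ∧ (j : ℕ) ≤ (i : ℕ) + f.natDegree then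
        f.coeff (f.natDegree + i - j) else 0)
    else
      (if (i : ℕ) - g.natDegree ≤ (j : ℕ) ∧ (j : ℕ) ≤ ((i : ℕ) - g.natDegree) + g.natDegree then
        g.coeff (g.natDegree + ((i : ℕ) - g.natDegree) - j) else 0)

/-- The resultant of two univariate polynomials over a commutative ring. -/
noncomputable def resultant {A : Type*} [CommRing A] (f g : Polynomial A) : A :=
  (sylvesterMatrix f g).det

/-- Evaluation `ℚ[x] → ℂ` at `α ∈ ℂ`. -/
noncomputable def evC1 (α : ℂ) : Polynomial ℚ →+* ℂ :=
  (Polynomial.aeval α).toRingHom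

/-- Evaluation `ℚ[x][y] → ℂ` at `(α, β) ∈ ℂ²`. -/
noncomputable def evC2 (α β : ℂ) : R2 →+* ℂ :=
  (Polynomial.evalRingHom β).comp (Polynomial.mapRingHom (evC1 α))

/-- The shear `(x,y) ↦ (x+sy, y)` acting on polynomials. -/
noncomputable def shear2 (s : ℚ) (h : R2) : R2 :=
  Polynomial.eval₂
    (Polynomial.eval₂RingHom (algebraMap ℚ R2)
      (Polynomial.C Polynomial.X + algebraMap ℚ R2 s * Polynomial.X))
    Polynomial.X h

/-- `u, v ∈ ℚ[x,y]` (with `gcd(u,v) = 1`) are in generic position w.r.t. `y`: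
(1) `gcd(lc(u,y), lc(v,y)) = 1` (no nonconstant common factor), and
(2) for every `α ∈ ℂ` vanishing `w = Res_y(u,v)`, the polynomials `u(α,y)` and
`v(α,y)` have exactly one common zero in `ℂ`. -/
noncomputable def GenericPositionPair (u v : R2) : Prop :=
  (∀ d : Polynomial ℚ, d ∣ u.leadingCoeff → d ∣ v.leadingCoeff → IsUnit d) ∧
  ∀ α : ℂ, evC1 α (_root_.resultant u v) = 0 →
    ∃! β : ℂ, evC2 α β u = 0 ∧ evC2 α β v = 0

lemma resultant_map {A B : Type*} [CommRing A] [CommRing B] (φ : A →+* B) (f g : Polynomial A)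
    (hf : (f.map φ).natDegree = f.natDegree) (hg : (g.map φ).natDegree = g.natDegree) :
    φ (_root_.resultant f g) = _root_.resultant (f.map φ) (g.map φ) := by
  unfold _root_.resultant
  rw [RingHom.map_det]
  have h' : (g.map φ).natDegree + (f.map φ).natDegree = g.natDegree + f.natDegree := by
    rw [hf, hg]
  have hM : sylvesterMatrix (f.map φ) (g.map φ)
      = (φ.mapMatrix (sylvesterMatrix f g)).submatrix (finCongr h') (finCongr h') := by
    ext i j
    simp only [Matrix.submatrix_apply, RingHom.mapMatrix_apply, Matrix.map_apply,
      sylvesterMatrix, finCongr_apply, Fin.coe_cast, hf, hg, coeff_map]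
    split_ifs <;> simp
  rw [hM, Matrix.det_submatrix_equiv_self]

lemma not_isCoprime_of_resultant_eq_zero {F : Type*} [Field F] {f g : Polynomial F}
    (hf : 1 ≤ f.natDegree) (hg : 1 ≤ g.natDegree) (h : _root_.resultant f g = 0) :
    ¬ IsCoprime f g := by
  intro hC
  have hf0 : f ≠ 0 := fun h0 => by simp [h0] at hf
  have hg0 : g ≠ 0 := fun h0 => by simp [h0] at hg
  set n := f.natDegree with hn
  set m := g.natDegree with hm
  obtain ⟨v, hv0, hvM⟩ := Matrix.exists_vecMul_eq_zero_iff.mpr h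
  set a : Polynomial F := ∑ t : Fin m, C (v (Fin.castAdd n t)) * X ^ (m - 1 - (t : ℕ)) with ha
  set b : Polynomial F := ∑ t : Fin n, C (v (Fin.natAdd m t)) * X ^ (n - 1 - (t : ℕ)) with hb
  -- degree bounds
  have hdega : a.natDegree ≤ m - 1 := by
    refine natDegree_sum_le_of_forall_le _ _ fun t _ => ?_
    refine le_trans (natDegree_C_mul_le _ _) (le_trans (natDegree_X_pow_le _) (by omega))
  have hdegb : b.natDegree ≤ n - 1 := by
    refine natDegree_sum_le_of_forall_le _ _ fun t _ => ?_
    refine le_trans (natDegree_C_mul_le _ _) (le_trans (natDegree_X_pow_le _) (by omega))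
  -- coefficient formulas
  have hca : ∀ d : ℕ, (a * f).coeff d
      = ∑ t : Fin m, v (Fin.castAdd n t) *
          (if m - 1 - (t : ℕ) ≤ d then f.coeff (d - (m - 1 - (t : ℕ))) else 0) := by
    intro d
    rw [ha, Finset.sum_mul, finset_sum_coeff]
    refine Finset.sum_congr rfl fun t _ => ?_
    rw [mul_assoc, mul_comm (X ^ (m - 1 - (t : ℕ))) f, ← mul_assoc, coeff_mul_X_pow',
      coeff_C_mul]
    split_ifs <;> simp
  have hcb : ∀ d : ℕ, (b * g).coeff d
      = ∑ t : Fin n, v (Fin.natAdd m t) *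
          (if n - 1 - (t : ℕ) ≤ d then g.coeff (d - (n - 1 - (t : ℕ))) else 0) := by
    intro d
    rw [hb, Finset.sum_mul, finset_sum_coeff]
    refine Finset.sum_congr rfl fun t _ => ?_
    rw [mul_assoc, mul_comm (X ^ (n - 1 - (t : ℕ))) g, ← mul_assoc, coeff_mul_X_pow',
      coeff_C_mul]
    split_ifs <;> simp
  -- the combination vanishes
  have hzero : a * f + b * g = 0 := by
    ext d
    rw [coeff_add, coeff_zero]
    by_cases hd : d < m + n
    · have hj : m + n - 1 - d < m + n := by omega
      have hvj := congrFun hvM ⟨m + n - 1 - d, hj⟩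
      rw [Matrix.vecMul, dotProduct, Pi.zero_apply, Fin.sum_univ_add] at hvj
      rw [hca, hcb]
      refine Eq.trans ?_ hvj
      congr 1
      · refine Finset.sum_congr rfl fun t _ => ?_
        congr 1
        have ht : (t : ℕ) < m := t.isLt
        simp only [sylvesterMatrix, Fin.coe_castAdd]
        rw [if_pos ht]
        split_ifs with h1 h2 h2
        · congr 1
          omega
        · apply coeff_eq_zero_of_natDegree_lt
          omega
        · exfalso
          omega
        · rfl
      · refine Finset.sum_congr rfl fun t _ => ?_
        congr 1
        have ht : (t : ℕ) < n := t.isLt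
        simp only [sylvesterMatrix, Fin.coe_natAdd]
        rw [if_neg (by omega : ¬ (m + (t : ℕ) < m))]
        split_ifs with h1 h2 h2
        · congr 1
          omega
        · apply coeff_eq_zero_of_natDegree_lt
          omega
        · exfalso
          omega
        · rfl
    · have h1 : (a * f).coeff d = 0 := by
        apply coeff_eq_zero_of_natDegree_lt
        calc (a * f).natDegree ≤ a.natDegree + f.natDegree := natDegree_mul_le
        _ ≤ (m - 1) + n := by omega
        _ < d := by omega
      have h2 : (b * g).coeff d = 0 := by
        apply coeff_eq_zero_of_natDegree_lt
        calc (b * g).natDegree ≤ b.natDegree + g.natDegree := natDegree_mul_le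
        _ ≤ (n - 1) + m := by omega
        _ < d := by omega
      rw [h1, h2, add_zero]
  -- from coprimality, conclude b = 0 and a = 0
  have hfb : f ∣ b := by
    refine hC.dvd_of_dvd_mul_right ⟨-a, ?_⟩
    have : b * g = -(a * f) := by linear_combination hzero
    rw [this]; ring
  have hb0 : b = 0 := by
    by_contra hb0
    have := natDegree_le_of_dvd hfb hb0
    omega
  have ha0 : a = 0 := by
    have : a * f = 0 := by rw [hb0] at hzero; simpa using hzero
    rcases mul_eq_zero.mp this with h | h
    · exact h
    · exact absurd h hf0
  -- hence v = 0, contradiction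
  apply hv0
  funext i
  refine Fin.addCases (motive := fun i => v i = 0) ?_ ?_ i
  · intro t
    have : a.coeff (m - 1 - (t : ℕ)) = v (Fin.castAdd n t) := by
      rw [ha, finset_sum_coeff]
      rw [Finset.sum_eq_single t]
      · rw [coeff_C_mul, coeff_X_pow, if_pos rfl, mul_one]
      · intro t' _ ht'
        rw [coeff_C_mul, coeff_X_pow, if_neg, mul_zero]
        intro hEq
        exact ht' (Fin.ext (by omega))
      · intro hmem
        exact absurd (Finset.mem_univ t) hmem
    rw [← this, ha0, coeff_zero]
  · intro t
    have : b.coeff (n - 1 - (t : ℕ)) = v (Fin.natAdd m t) := by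
      rw [hb, finset_sum_coeff]
      rw [Finset.sum_eq_single t]
      · rw [coeff_C_mul, coeff_X_pow, if_pos rfl, mul_one]
      · intro t' _ ht'
        rw [coeff_C_mul, coeff_X_pow, if_neg, mul_zero]
        intro hEq
        exact ht' (Fin.ext (by omega))
      · intro hmem
        exact absurd (Finset.mem_univ t) hmem
    rw [← this, hb0, coeff_zero]

lemma exists_common_root {f g : Polynomial ℂ} (hf : 1 ≤ f.natDegree) (hg : 1 ≤ g.natDegree)
    (h : _root_.resultant f g = 0) : ∃ β : ℂ, f.eval β = 0 ∧ g.eval β = 0 := by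
  classical
  have hnc := not_isCoprime_of_resultant_eq_zero hf hg h
  have hf0 : f ≠ 0 := fun h0 => by simp [h0] at hf
  have hd := fun hgu => hnc (EuclideanDomain.gcd_isUnit_iff.mp hgu)
  set d := EuclideanDomain.gcd f g with hdd
  have hdf : d ∣ f := EuclideanDomain.gcd_dvd_left f g
  have hdg : d ∣ g := EuclideanDomain.gcd_dvd_right f g
  have hd0 : d ≠ 0 := fun h0 => hf0 (zero_dvd_iff.mp (h0 ▸ hdf))
  have hdeg : 0 < d.degree := by
    rcases lt_or_eq_of_le (zero_le_degree_iff.mpr hd0) with h' | h'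
    · exact h'
    · exact absurd (Polynomial.isUnit_iff_degree_eq_zero.mpr h'.symm) hd
  obtain ⟨β, hβ⟩ := Complex.exists_root hdeg
  obtain ⟨e1, he1⟩ := hdf
  obtain ⟨e2, he2⟩ := hdg
  refine ⟨β, ?_, ?_⟩
  · rw [he1, eval_mul, hβ, zero_mul]
  · rw [he2, eval_mul, hβ, zero_mul]

-- ## auxiliary
noncomputable def sPhi (s : ℚ) : Polynomial ℚ →+* R2 :=
  Polynomial.eval₂RingHom (algebraMap ℚ R2)
    (Polynomial.C Polynomial.X + algebraMap ℚ R2 s * Polynomial.X)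

noncomputable def shearHom (s : ℚ) : R2 →+* R2 :=
  Polynomial.eval₂RingHom (sPhi s) Polynomial.X

lemma shear2_eq (s : ℚ) (h : R2) : shear2 s h = shearHom s h := rfl

noncomputable def sW (s : ℚ) : R2 :=
  Polynomial.C Polynomial.X + algebraMap ℚ R2 s * Polynomial.X

lemma sW_coeff_one (s : ℚ) : (sW s).coeff 1 = C s := by
  simp [sW, Polynomial.algebraMap_apply, coeff_C]

lemma sW_natDegree_le (s : ℚ) : (sW s).natDegree ≤ 1 := by
  refine le_trans (natDegree_add_le _ _) ?_
  simp only [natDegree_C, max_le_iff]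
  constructor
  · omega
  · exact le_trans natDegree_mul_le (by simp)

lemma sW_natDegree (s : ℚ) (hs : s ≠ 0) : (sW s).natDegree = 1 := by
  refine le_antisymm (sW_natDegree_le s) ?_
  refine le_natDegree_of_ne_zero ?_
  rw [sW_coeff_one]
  simpa using hs

lemma sW_leadingCoeff (s : ℚ) (hs : s ≠ 0) : (sW s).leadingCoeff = C s := by
  rw [leadingCoeff, sW_natDegree s hs, sW_coeff_one]

lemma sPhi_natDegree_le (s : ℚ) (p : Polynomial ℚ) : (sPhi s p).natDegree ≤ p.natDegree := by
  have : sPhi s p = p.sum fun i a => algebraMap ℚ R2 a * (sW s) ^ i := by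
    rw [sPhi, coe_eval₂RingHom, eval₂_eq_sum]; rfl
  rw [this, Polynomial.sum_def]
  refine natDegree_sum_le_of_forall_le _ _ fun i hi => ?_
  refine le_trans natDegree_mul_le ?_
  have h1 : (algebraMap ℚ R2 (p.coeff i)).natDegree = 0 := by
    rw [Polynomial.algebraMap_apply]; simp
  have h2 : ((sW s) ^ i).natDegree ≤ i := by
    refine le_trans (natDegree_pow_le) ?_
    have := sW_natDegree_le s
    nlinarith [sW_natDegree_le s]
  have := le_natDegree_of_mem_supp i hi
  omega

lemma sPhi_coeff_top (s : ℚ) (hs : s ≠ 0) (p : Polynomial ℚ) {e : ℕ} (he : p.natDegree ≤ e) :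
    (sPhi s p).coeff e = C (p.coeff e * s ^ e) := by
  have hrw : sPhi s p = ∑ i ∈ p.support, Polynomial.C (Polynomial.C (p.coeff i)) * (sW s) ^ i := by
    rw [sPhi, coe_eval₂RingHom, eval₂_eq_sum, Polynomial.sum_def]
    refine Finset.sum_congr rfl fun i _ => ?_
    congr 1
  rw [hrw, finset_sum_coeff]
  rw [Finset.sum_eq_single e]
  · by_cases hmem : e ∈ p.support
    · rw [coeff_C_mul]
      have : ((sW s) ^ e).coeff e = (C s) ^ e := by
        have := coeff_pow_mul_natDegree (sW s) e
        rw [sW_natDegree s hs, mul_one, sW_leadingCoeff s hs] at this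
        exact this
      rw [this, ← C_pow, ← C_mul]
    · have h0 : p.coeff e = 0 := notMem_support_iff.mp hmem
      simp [h0]
  · intro i hi hne
    rw [coeff_C_mul]
    have hilt : i < e := lt_of_le_of_ne (le_trans (le_natDegree_of_mem_supp i hi) he) hne
    have : ((sW s) ^ i).coeff e = 0 := by
      apply coeff_eq_zero_of_natDegree_lt
      refine lt_of_le_of_lt (le_trans natDegree_pow_le ?_) hilt
      nlinarith [sW_natDegree_le s]
    rw [this, mul_zero]
  · intro hmem
    simp [notMem_support_iff.mp hmem]

lemma td_le {h : R2} {j : ℕ} (hj : h.coeff j ≠ 0) :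
    j + (h.coeff j).natDegree ≤ totalDeg2 h :=
  Finset.le_sup (f := fun i => i + (h.coeff i).natDegree) (mem_support_iff.mpr hj)

/-- The polynomial (in `s`) giving the top `y`-coefficient of the sheared polynomial. -/
noncomputable def sPsi (h : R2) : Polynomial ℚ :=
  ∑ j ∈ h.support, C ((h.coeff j).coeff (totalDeg2 h - j)) * X ^ (totalDeg2 h - j)

lemma sPsi_ne_zero {h : R2} (hh : h ≠ 0) : sPsi h ≠ 0 := by
  obtain ⟨j₀, hj₀, hsup⟩ := Finset.exists_mem_eq_sup h.support
    (nonempty_support_iff.mpr hh) (fun i => i + (h.coeff i).natDegree)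
  have hsup' : totalDeg2 h = j₀ + (h.coeff j₀).natDegree := hsup
  intro h0
  have hc : (sPsi h).coeff (totalDeg2 h - j₀) = (h.coeff j₀).coeff ((h.coeff j₀).natDegree) := by
    rw [sPsi, finset_sum_coeff, Finset.sum_eq_single j₀]
    · rw [coeff_C_mul, coeff_X_pow, if_pos rfl, mul_one, hsup']
      congr 1
      omega
    · intro j hj hne
      rw [coeff_C_mul, coeff_X_pow, if_neg, mul_zero]
      have hjle : j + (h.coeff j).natDegree ≤ totalDeg2 h := Finset.le_sup (f := fun i => i + (h.coeff i).natDegree) hj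
      intro hEq
      exact hne (by omega)
    · intro hmem
      exact absurd hj₀ hmem
  rw [h0, coeff_zero] at hc
  exact (mem_support_iff.mp hj₀) (leadingCoeff_eq_zero.mp hc.symm)

lemma shear2_eq_sum (s : ℚ) (h : R2) :
    shear2 s h = ∑ j ∈ h.support, (sPhi s) (h.coeff j) * X ^ j := by
  rw [shear2_eq, shearHom, coe_eval₂RingHom, eval₂_eq_sum, Polynomial.sum_def]

lemma shear2_coeff_top (s : ℚ) (hs : s ≠ 0) (h : R2) :
    (shear2 s h).coeff (totalDeg2 h) = C ((sPsi h).eval s) := by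
  rw [shear2_eq_sum, finset_sum_coeff]
  have : ∀ j ∈ h.support, ((sPhi s) (h.coeff j) * X ^ j).coeff (totalDeg2 h)
      = C ((h.coeff j).coeff (totalDeg2 h - j) * s ^ (totalDeg2 h - j)) := by
    intro j hj
    have hle := td_le (mem_support_iff.mp hj)
    rw [coeff_mul_X_pow', if_pos (by omega)]
    exact sPhi_coeff_top s hs _ (by omega)
  rw [Finset.sum_congr rfl this, sPsi, eval_finset_sum, map_sum]
  refine Finset.sum_congr rfl fun j hj => ?_
  simp

lemma shear2_coeff_high (s : ℚ) (h : R2) {k : ℕ} (hk : totalDeg2 h < k) :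
    (shear2 s h).coeff k = 0 := by
  rw [shear2_eq_sum, finset_sum_coeff]
  refine Finset.sum_eq_zero fun j hj => ?_
  have hle := td_le (mem_support_iff.mp hj)
  rw [coeff_mul_X_pow']
  split_ifs with hjk
  · apply coeff_eq_zero_of_natDegree_lt
    have := sPhi_natDegree_le s (h.coeff j)
    omega
  · rfl

lemma shear2_natDegree (s : ℚ) (hs : s ≠ 0) {h : R2} (hψ : (sPsi h).eval s ≠ 0) :
    (shear2 s h).natDegree = totalDeg2 h := by
  refine le_antisymm (natDegree_le_iff_coeff_eq_zero.mpr fun k hk => shear2_coeff_high s h hk) ?_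
  refine le_natDegree_of_ne_zero ?_
  rw [shear2_coeff_top s hs h]
  simpa using hψ

lemma shear2_leadingCoeff (s : ℚ) (hs : s ≠ 0) {h : R2} (hψ : (sPsi h).eval s ≠ 0) :
    (shear2 s h).leadingCoeff = C ((sPsi h).eval s) := by
  rw [leadingCoeff, shear2_natDegree s hs hψ, shear2_coeff_top s hs h]

lemma evC2_X (α β : ℂ) : evC2 α β X = β := by
  simp [evC2]

lemma evC2_C (α β : ℂ) (p : Polynomial ℚ) : evC2 α β (C p) = evC1 α p := by
  simp [evC2]

lemma evC1_eq_aeval (α : ℂ) (p : Polynomial ℚ) : evC1 α p = aeval α p := rfl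

lemma evC2_ratAlgebraMap (α β : ℂ) (q : ℚ) :
    evC2 α β (algebraMap ℚ R2 q) = algebraMap ℚ ℂ q := by
  have h : (evC2 α β).comp (algebraMap ℚ R2) = algebraMap ℚ ℂ := Subsingleton.elim _ _
  exact RingHom.congr_fun h q

lemma evC2_shear2 (s : ℚ) (α β : ℂ) (h : R2) :
    evC2 α β (shear2 s h) = evC2 (α + s * β) β h := by
  rw [shear2_eq]
  have key : (evC2 α β).comp (shearHom s) = evC2 (α + s * β) β := by
    apply Polynomial.ringHom_ext
    · intro p
      have hcomp : ((evC2 α β).comp (shearHom s)).comp (C : Polynomial ℚ →+* R2)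
          = ((evC2 (α + s * β) β)).comp (C : Polynomial ℚ →+* R2) := by
        apply Polynomial.ringHom_ext
        · intro q
          simp only [RingHom.comp_apply]
          have h1 : (C (C q) : R2) = algebraMap ℚ R2 q := rfl
          rw [h1]
          have h2 : shearHom s (algebraMap ℚ R2 q) = algebraMap ℚ R2 q := by
            have : ((shearHom s).comp (algebraMap ℚ R2)) = algebraMap ℚ R2 :=
              Subsingleton.elim _ _
            exact RingHom.congr_fun this q
          rw [h2, evC2_ratAlgebraMap, evC2_ratAlgebraMap]
        · simp only [RingHom.comp_apply]
          have h1 : shearHom s (C X) = C X + algebraMap ℚ R2 s * X := by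
            rw [shearHom, coe_eval₂RingHom, eval₂_C, sPhi, coe_eval₂RingHom, eval₂_X]
          rw [h1]
          rw [map_add, map_mul, evC2_ratAlgebraMap, evC2_X, evC2_C, evC2_C]
          rw [evC1_eq_aeval, evC1_eq_aeval]
          simp [Rat.cast_def]
      exact RingHom.congr_fun hcomp p
    · simp only [RingHom.comp_apply]
      have h1 : shearHom s (X : R2) = X := by
        rw [shearHom, coe_eval₂RingHom, eval₂_X]
      rw [h1, evC2_X, evC2_X]
  exact RingHom.congr_fun key h

noncomputable abbrev KK : Type := FractionRing (Polynomial ℚ)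
noncomputable abbrev iK : Polynomial ℚ →+* KK := algebraMap (Polynomial ℚ) KK

lemma iK_injective : Function.Injective iK := IsFractionRing.injective _ _

lemma map_iK_ne_zero {p : R2} (hp : p ≠ 0) : p.map iK ≠ 0 :=
  (Polynomial.map_ne_zero_iff iK_injective).mpr hp

lemma isCoprime_map_fractionRing (u v : R2) (hu : u ≠ 0) (hv : v ≠ 0)
    (hcop : ∀ d : R2, d ∣ u → d ∣ v → IsUnit d) :
    IsCoprime (u.map iK) (v.map iK) := by
  classical
  rw [← EuclideanDomain.gcd_isUnit_iff]
  by_contra hgu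
  set d := EuclideanDomain.gcd (u.map iK) (v.map iK) with hd
  have hdu : d ∣ u.map iK := EuclideanDomain.gcd_dvd_left _ _
  have hdv : d ∣ v.map iK := EuclideanDomain.gcd_dvd_right _ _
  have hd0 : d ≠ 0 := by
    intro h0
    rw [h0] at hdu
    exact map_iK_ne_zero hu (zero_dvd_iff.mp hdu)
  set d' := IsLocalization.integerNormalization (nonZeroDivisors (Polynomial ℚ)) d with hd'
  have hd'0 : d' ≠ 0 := fun h0 => hd0 (IsFractionRing.integerNormalization_eq_zero_iff.mp h0)
  obtain ⟨c, hc⟩ := IsLocalization.integerNormalization_map_to_map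
      (nonZeroDivisors (Polynomial ℚ)) d
  have hc0 : (c : Polynomial ℚ) ≠ 0 := nonZeroDivisors.coe_ne_zero c
  have hcsmul : d'.map iK = C (iK c) * d := by
    rw [hc, ← algebraMap_smul KK (c : Polynomial ℚ) d, smul_eq_C_mul]
  set d₀ := d'.primPart with hd₀
  have hd₀prim : d₀.IsPrimitive := isPrimitive_primPart d'
  have hd₀dvd' : d₀ ∣ d' := primPart_dvd d'
  -- d₀ divides u and v
  have hdvd : ∀ w : R2, w ≠ 0 → d ∣ w.map iK → d₀ ∣ w := by
    intro w hw0 hdw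
    have hcu : IsUnit (C (iK c) : Polynomial KK) := by
      refine isUnit_C.mpr (isUnit_iff_ne_zero.mpr ?_)
      simpa using fun h => hc0 (iK_injective (by simpa using h))
    have h1 : d₀.map iK ∣ w.map iK := by
      refine dvd_trans (Polynomial.map_dvd iK hd₀dvd') ?_
      rw [hcsmul]
      rw [mul_comm]
      exact (hcu.mul_right_dvd).mpr hdw
    have hwc : w = C w.content * w.primPart := w.eq_C_content_mul_primPart
    have h2 : d₀.map iK ∣ w.primPart.map iK := by
      have hcont : IsUnit (C (iK w.content)) := by
        refine isUnit_C.mpr (isUnit_iff_ne_zero.mpr ?_)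
        simpa using fun h => hw0 (content_eq_zero_iff.mp (iK_injective (by simpa using h)))
      have : w.map iK = C (iK w.content) * w.primPart.map iK := by
        conv_lhs => rw [hwc]
        rw [Polynomial.map_mul, map_C]
      rw [this] at h1
      exact (hcont.dvd_mul_left).mp h1
    have h3 : d₀ ∣ w.primPart :=
      hd₀prim.dvd_of_fraction_map_dvd_fraction_map h2
    exact dvd_trans h3 (primPart_dvd w)
  have hunit₀ : IsUnit d₀ := hcop d₀ (hdvd u hu hdu) (hdvd v hv hdv)
  -- conclude d is a unit, contradiction
  apply hgu
  have : C (iK c) * d = C (iK d'.content) * d₀.map iK := by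
    rw [← hcsmul]
    conv_lhs => rw [show d' = C d'.content * d₀ from (d'.eq_C_content_mul_primPart)]
    rw [Polynomial.map_mul, map_C]
  have hu1 : IsUnit (C (iK d'.content) * d₀.map iK) := by
    refine IsUnit.mul ?_ (hunit₀.map (mapRingHom iK))
    refine isUnit_C.mpr (isUnit_iff_ne_zero.mpr ?_)
    simpa using fun h => hd'0 (content_eq_zero_iff.mp (iK_injective (by simpa using h)))
  rw [← this] at hu1
  exact isUnit_of_mul_isUnit_right hu1

lemma exists_bezout (u v : R2) (hu : u ≠ 0) (hv : v ≠ 0)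
    (hcop : ∀ d : R2, d ∣ u → d ∣ v → IsUnit d) :
    ∃ (A B : R2) (r : Polynomial ℚ), r ≠ 0 ∧ A * u + B * v = C r := by
  obtain ⟨a, b, hab⟩ := isCoprime_map_fractionRing u v hu hv hcop
  obtain ⟨ca, hA⟩ := IsLocalization.integerNormalization_map_to_map
      (nonZeroDivisors (Polynomial ℚ)) a
  obtain ⟨cb, hB⟩ := IsLocalization.integerNormalization_map_to_map
      (nonZeroDivisors (Polynomial ℚ)) b
  set A' := IsLocalization.integerNormalization (nonZeroDivisors (Polynomial ℚ)) a with hA'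
  set B' := IsLocalization.integerNormalization (nonZeroDivisors (Polynomial ℚ)) b with hB'
  have hA2 : A'.map iK = C (iK ca) * a := by
    rw [hA, ← algebraMap_smul KK (ca : Polynomial ℚ) a, smul_eq_C_mul]
  have hB2 : B'.map iK = C (iK cb) * b := by
    rw [hB, ← algebraMap_smul KK (cb : Polynomial ℚ) b, smul_eq_C_mul]
  refine ⟨C (cb : Polynomial ℚ) * A', C (ca : Polynomial ℚ) * B', (ca : Polynomial ℚ) * cb,
    mul_ne_zero (nonZeroDivisors.coe_ne_zero ca) (nonZeroDivisors.coe_ne_zero cb), ?_⟩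
  apply Polynomial.map_injective iK iK_injective
  rw [Polynomial.map_add, Polynomial.map_mul, Polynomial.map_mul, Polynomial.map_mul,
    Polynomial.map_mul, map_C, map_C, hA2, hB2, map_C, map_mul]
  have : C (iK (ca : Polynomial ℚ)) * C (iK (cb : Polynomial ℚ))
      * (a * u.map iK + b * v.map iK) = C (iK (ca : Polynomial ℚ) * iK (cb : Polynomial ℚ)) := by
    rw [hab, mul_one, C_mul]
  rw [← this]
  ring

lemma evC2_eq (α β : ℂ) (h : R2) : evC2 α β h = (h.map (evC1 α)).eval β := rfl

lemma evC2_CC (α β : ℂ) (p : Polynomial ℚ) : evC2 α β (C p) = aeval α p := by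
  rw [evC2_eq, map_C, eval_C]
  rfl

lemma Zset_finite (u v : R2) (hu : u ≠ 0) (hv : v ≠ 0)
    (hcop : ∀ d : R2, d ∣ u → d ∣ v → IsUnit d) :
    {z : ℂ × ℂ | evC2 z.1 z.2 u = 0 ∧ evC2 z.1 z.2 v = 0}.Finite := by
  obtain ⟨A, B, r, hr0, hid⟩ := exists_bezout u v hu hv hcop
  have hAfin : {α : ℂ | aeval α r = 0}.Finite := by
    have : {α : ℂ | aeval α r = 0} = {α : ℂ | IsRoot (r.map (algebraMap ℚ ℂ)) α} := by
      ext α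
      simp only [Set.mem_setOf_eq, IsRoot.def, eval_map, aeval_def]
    rw [this]
    exact finite_setOf_isRoot ((Polynomial.map_ne_zero_iff
      (algebraMap ℚ ℂ).injective).mpr hr0)
  have hfib : ∀ α : ℂ, aeval α r = 0 →
      {β : ℂ | evC2 α β u = 0 ∧ evC2 α β v = 0}.Finite := by
    intro α hα
    by_cases hmu : u.map (evC1 α) ≠ 0
    · refine Set.Finite.subset (finite_setOf_isRoot hmu) ?_
      intro β hβ
      exact hβ.1
    · push_neg at hmu
      have hmv : v.map (evC1 α) ≠ 0 := by
        intro hmv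
        -- both specializations vanish: contradiction with coprimality via minpoly
        have halg : IsIntegral ℚ α := IsAlgebraic.isIntegral ⟨r, hr0, hα⟩
        set m := minpoly ℚ α with hm
        have hmdvd : ∀ w : R2, w.map (evC1 α) = 0 → C m ∣ w := by
          intro w hw
          rw [C_dvd_iff_dvd_coeff]
          intro i
          apply minpoly.dvd ℚ α
          have := congrArg (fun p => p.coeff i) hw
          exact (by simpa [coeff_map] using this : evC1 α (w.coeff i) = 0)
        have := hcop (C m) (hmdvd u hmu) (hmdvd v hmv)
        rw [isUnit_C] at this
        have hdeg := minpoly.degree_pos halg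
        rw [Polynomial.isUnit_iff_degree_eq_zero] at this
        rw [this] at hdeg
        exact lt_irrefl _ hdeg
      refine Set.Finite.subset (finite_setOf_isRoot hmv) ?_
      intro β hβ
      exact hβ.2
  refine Set.Finite.subset (Set.Finite.biUnion hAfin
    (fun α hα => (Set.finite_singleton α).prod (hfib α hα))) ?_
  intro z hz
  have hα : aeval z.1 r = 0 := by
    have := congrArg (evC2 z.1 z.2) hid
    rw [map_add, map_mul, map_mul, hz.1, hz.2, mul_zero, mul_zero, add_zero, evC2_CC] at this
    exact this.symm
  exact Set.mem_biUnion hα ⟨rfl, hz⟩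


theorem statement_5 (u v : R2)
    (hu : u ≠ 0) (hv : v ≠ 0)
    (hdu : 0 < totalDeg2 u) (hdv : 0 < totalDeg2 v)
    (hcop : ∀ d : R2, d ∣ u → d ∣ v → IsUnit d) :
    {s : ℚ | ¬ GenericPositionPair (shear2 s u) (shear2 s v)}.Finite := by
  classical
  set Z : Set (ℂ × ℂ) := {z : ℂ × ℂ | evC2 z.1 z.2 u = 0 ∧ evC2 z.1 z.2 v = 0} with hZdef
  have hZ : Z.Finite := Zset_finite u v hu hv hcop
  set S2 : Set ℚ :=
    {s : ℚ | ∃ z ∈ Z, ∃ z' ∈ Z, z ≠ z' ∧ z.1 - (s : ℂ) * z.2 = z'.1 - (s : ℂ) * z'.2} with hS2def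
  have hS2 : S2.Finite := by
    have hsub : S2 ⊆ ⋃ z ∈ Z, ⋃ z' ∈ Z,
        {s : ℚ | z ≠ z' ∧ z.1 - (s : ℂ) * z.2 = z'.1 - (s : ℂ) * z'.2} := by
      rintro s ⟨z, hz, z', hz', hne, heq⟩
      exact Set.mem_biUnion hz (Set.mem_biUnion hz' ⟨hne, heq⟩)
    refine Set.Finite.subset (Set.Finite.biUnion hZ fun z _ =>
      Set.Finite.biUnion hZ fun z' _ => Set.Subsingleton.finite ?_) hsub
    intro s₁ h₁ s₂ h₂
    have hzz : z.2 ≠ z'.2 := by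
      intro h22
      apply h₁.1
      have := h₁.2
      rw [h22] at this
      have h11 : z.1 = z'.1 := by linear_combination this
      exact Prod.ext h11 h22
    have hc : (s₁ : ℂ) = (s₂ : ℂ) := by
      have e1 : (s₁ : ℂ) * (z'.2 - z.2) = z'.1 - z.1 := by linear_combination h₁.2
      have e2 : (s₂ : ℂ) * (z'.2 - z.2) = z'.1 - z.1 := by linear_combination h₂.2
      have hne : z'.2 - z.2 ≠ 0 := sub_ne_zero.mpr (Ne.symm hzz)
      exact mul_right_cancel₀ hne (e1.trans e2.symm)
    exact_mod_cast hc
  have hψu : sPsi u ≠ 0 := sPsi_ne_zero hu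
  have hψv : sPsi v ≠ 0 := sPsi_ne_zero hv
  refine Set.Finite.subset ((((Set.finite_singleton (0 : ℚ)).union
    (finite_setOf_isRoot hψu)).union (finite_setOf_isRoot hψv)).union hS2) ?_
  intro s hs
  by_contra hsB
  simp only [Set.mem_union, Set.mem_singleton_iff, Set.mem_setOf_eq, not_or] at hsB
  obtain ⟨⟨⟨hs0, hru⟩, hrv⟩, hsS2⟩ := hsB
  have hcu : (sPsi u).eval s ≠ 0 := hru
  have hcv : (sPsi v).eval s ≠ 0 := hrv
  apply hs
  set U := shear2 s u with hU
  set V := shear2 s v with hV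
  have hUdeg : U.natDegree = totalDeg2 u := shear2_natDegree s hs0 hcu
  have hVdeg : V.natDegree = totalDeg2 v := shear2_natDegree s hs0 hcv
  have hUlc : U.leadingCoeff = C ((sPsi u).eval s) := shear2_leadingCoeff s hs0 hcu
  have hVlc : V.leadingCoeff = C ((sPsi v).eval s) := shear2_leadingCoeff s hs0 hcv
  constructor
  · -- condition (1)
    intro d hd1 hd2
    rw [hUlc] at hd1
    exact isUnit_of_dvd_unit hd1 (isUnit_C.mpr (isUnit_iff_ne_zero.mpr hcu))
  · -- condition (2)
    intro α hres
    have hφlcU : evC1 α U.leadingCoeff ≠ 0 := by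
      rw [hUlc, evC1_eq_aeval, aeval_C]
      simpa using hcu
    have hφlcV : evC1 α V.leadingCoeff ≠ 0 := by
      rw [hVlc, evC1_eq_aeval, aeval_C]
      simpa using hcv
    have hmapU : (U.map (evC1 α)).natDegree = U.natDegree :=
      natDegree_map_of_leadingCoeff_ne_zero _ hφlcU
    have hmapV : (V.map (evC1 α)).natDegree = V.natDegree :=
      natDegree_map_of_leadingCoeff_ne_zero _ hφlcV
    have hres' : _root_.resultant (U.map (evC1 α)) (V.map (evC1 α)) = 0 := by
      rw [← resultant_map (evC1 α) U V hmapU hmapV]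
      exact hres
    obtain ⟨β, hβu, hβv⟩ := exists_common_root
      (by rw [hmapU, hUdeg]; exact hdu) (by rw [hmapV, hVdeg]; exact hdv) hres'
    have huniq : ∀ β₁ β₂ : ℂ, (evC2 α β₁ U = 0 ∧ evC2 α β₁ V = 0) →
        (evC2 α β₂ U = 0 ∧ evC2 α β₂ V = 0) → β₁ = β₂ := by
      intro β₁ β₂ h1 h2
      by_contra hne
      apply hsS2
      refine ⟨(α + s * β₁, β₁), ?_, (α + s * β₂, β₂), ?_, ?_, by push_cast; ring⟩
      · constructor
        · have := h1.1
          rw [hU, evC2_shear2] at this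
          exact this
        · have := h1.2
          rw [hV, evC2_shear2] at this
          exact this
      · constructor
        · have := h2.1
          rw [hU, evC2_shear2] at this
          exact this
        · have := h2.2
          rw [hV, evC2_shear2] at this
          exact this
      · intro hzz
        exact hne (congrArg Prod.snd hzz)
    refine ⟨β, ⟨?_, ?_⟩, fun β' hβ' => huniq β' β hβ' ⟨?_, ?_⟩⟩
    · rw [evC2_eq]; exact hβu
    · rw [evC2_eq]; exact hβv
    · rw [evC2_eq]; exact hβu
    · rw [evC2_eq]; exact hβv
end

section
/- Let g ∈ ℤ[x] be a nonzero polynomial with deg g ≤ d whose coefficients are at most 2^λ in absolute value, and let g* ∈ ℤ[x] denote the squarefree part of g, i.e. the primitive integer polynomial (unique up to sign) whose complex roots are exactly the distinct complex roots of g, each with multiplicity one. Then deg g* ≤ d and every coefficient of g* is at most 2^{d+λ} · √(d+1) in absolute value. -/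
/-!
STATEMENT 8: Let `g ∈ ℤ[x]` be nonzero with `deg g ≤ d` and coefficients at most
`2^λ` in absolute value, and let `g*` be its squarefree part: the primitive
integer polynomial whose complex roots are exactly the distinct complex roots of
`g`, each with multiplicity one.  Then `deg g* ≤ d` and every coefficient of
`g*` is at most `2^{d+λ} · √(d+1)` in absolute value.
-/

open Polynomial

noncomputable def n2 (p : Polynomial ℂ) : ℝ :=
  ∑ i ∈ Finset.range (p.natDegree + 1), ‖p.coeff i‖ ^ 2

lemma n2_eq_range (p : Polynomial ℂ) {N : ℕ} (hN : p.natDegree + 1 ≤ N) :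
    n2 p = ∑ i ∈ Finset.range N, ‖p.coeff i‖ ^ 2 := by
  rw [n2]
  refine (Finset.sum_subset (f := fun i => ‖p.coeff i‖ ^ 2)
    (Finset.range_subset_range.2 hN) fun i _ hi => ?_)
  rw [Finset.mem_range, not_lt] at hi
  rw [p.coeff_eq_zero_of_natDegree_lt (by omega), norm_zero]
  norm_num

lemma n2_nonneg (p : Polynomial ℂ) : 0 ≤ n2 p :=
  Finset.sum_nonneg fun _ _ => sq_nonneg _

lemma norm_sq_complex (z : ℂ) : ‖z‖ ^ 2 = Complex.normSq z := by
  rw [Complex.sq_norm z]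

lemma key_sq (a b α : ℂ) :
    ‖a - α * b‖ ^ 2 - ‖(starRingEnd ℂ) α * a - b‖ ^ 2
      = (1 - ‖α‖ ^ 2) * (‖a‖ ^ 2 - ‖b‖ ^ 2) := by
  simp only [norm_sq_complex, Complex.normSq_apply,
    Complex.sub_re, Complex.sub_im, Complex.mul_re, Complex.mul_im,
    Complex.conj_re, Complex.conj_im]
  ring

lemma swap_lemma (α : ℂ) (r : Polynomial ℂ) :
    n2 ((X - C α) * r) = n2 ((C ((starRingEnd ℂ) α) * X - 1) * r) := by
  have hd1 : ((X - C α) * r).natDegree + 1 ≤ r.natDegree + 1 + 1 := by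
    have := natDegree_mul_le (p := X - C α) (q := r)
    have h2 : (X - C α).natDegree ≤ 1 := (natDegree_X_sub_C α).le
    omega
  have hd2 : ((C ((starRingEnd ℂ) α) * X - 1) * r).natDegree + 1 ≤ r.natDegree + 1 + 1 := by
    have := natDegree_mul_le (p := C ((starRingEnd ℂ) α) * X - 1) (q := r)
    have h2 : (C ((starRingEnd ℂ) α) * X - 1).natDegree ≤ 1 := by
      refine (natDegree_sub_le _ _).trans ?_
      simp only [natDegree_one, max_le_iff]
      exact ⟨(natDegree_C_mul_le _ _).trans (by simp), by norm_num⟩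
    omega
  rw [n2_eq_range _ hd1, n2_eq_range _ hd2]
  have ca : ∀ i, ((X - C α) * r).coeff i = (X * r).coeff i - α * r.coeff i := by
    intro i; rw [sub_mul, coeff_sub, coeff_C_mul]
  have cb : ∀ i, ((C ((starRingEnd ℂ) α) * X - 1) * r).coeff i
      = (starRingEnd ℂ) α * (X * r).coeff i - r.coeff i := by
    intro i; rw [sub_mul, coeff_sub, one_mul, mul_assoc, coeff_C_mul]
  simp only [ca, cb]
  have hsums : ∑ i ∈ Finset.range (r.natDegree + 1 + 1), ‖(X * r).coeff i‖ ^ 2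
      = ∑ i ∈ Finset.range (r.natDegree + 1 + 1), ‖r.coeff i‖ ^ 2 := by
    have L : ∑ i ∈ Finset.range (r.natDegree + 1 + 1), ‖(X * r).coeff i‖ ^ 2
        = ∑ i ∈ Finset.range (r.natDegree + 1), ‖r.coeff i‖ ^ 2 := by
      rw [Finset.sum_range_succ']
      simp [coeff_X_mul]
    have R : ∑ i ∈ Finset.range (r.natDegree + 1 + 1), ‖r.coeff i‖ ^ 2
        = ∑ i ∈ Finset.range (r.natDegree + 1), ‖r.coeff i‖ ^ 2 := by
      rw [Finset.sum_range_succ]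
      simp [r.coeff_eq_zero_of_natDegree_lt (by omega : r.natDegree < r.natDegree + 1)]
    rw [L, R]
  have hk := Finset.sum_congr rfl (fun i (_ : i ∈ Finset.range (r.natDegree + 1 + 1)) =>
    key_sq ((X * r).coeff i) (r.coeff i) α)
  rw [← sub_eq_zero, ← Finset.sum_sub_distrib, hk, ← Finset.mul_sum,
    Finset.sum_sub_distrib, hsums]
  simp

noncomputable def tf (z : ℂ) : Polynomial ℂ :=
  if 1 < ‖z‖ then C ((starRingEnd ℂ) z) * X - 1 else X - C z

lemma tf_ne_zero (z : ℂ) : tf z ≠ 0 := by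
  unfold tf
  split
  · intro h
    have := congrArg (fun p => Polynomial.coeff p 0) h
    simp at this
  · exact X_sub_C_ne_zero z

lemma tf_leadingCoeff_norm (z : ℂ) : ‖(tf z).leadingCoeff‖ = max 1 ‖z‖ := by
  unfold tf
  split
  · rename_i h
    have hz : (starRingEnd ℂ) z ≠ 0 := fun h0 => by
      have h1 : ‖z‖ = 0 := by simpa using congrArg norm h0
      rw [h1] at h; norm_num at h
    have hdeg1 : (C ((starRingEnd ℂ) z) * X).degree = 1 := degree_C_mul_X hz
    have hdeg : (C ((starRingEnd ℂ) z) * X - 1).natDegree = 1 := by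
      refine natDegree_eq_of_degree_eq_some ?_
      rw [degree_sub_eq_left_of_degree_lt
        (by rw [hdeg1]; exact lt_of_le_of_lt degree_one_le (by norm_num)), hdeg1]
      norm_num
    rw [leadingCoeff, hdeg]
    simp only [coeff_sub, coeff_C_mul, coeff_X_one, mul_one, coeff_one]
    norm_num
    exact h.le
  · rename_i h
    rw [leadingCoeff_X_sub_C, norm_one, max_eq_left (not_lt.1 h)]

lemma tf_swap (z : ℂ) (r : Polynomial ℂ) : n2 ((X - C z) * r) = n2 (tf z * r) := by
  unfold tf
  split
  · exact swap_lemma z r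
  · rfl

lemma prod_tf_n2 (S : Multiset ℂ) :
    ∀ r : Polynomial ℂ, n2 ((S.map fun z => X - C z).prod * r) = n2 ((S.map tf).prod * r) := by
  induction S using Multiset.induction_on with
  | empty => intro r; simp
  | cons a S ih =>
    intro r
    rw [Multiset.map_cons, Multiset.map_cons, Multiset.prod_cons, Multiset.prod_cons]
    calc n2 ((X - C a) * (S.map fun z => X - C z).prod * r)
        = n2 ((S.map fun z => X - C z).prod * ((X - C a) * r)) := by ring_nf
      _ = n2 ((S.map tf).prod * ((X - C a) * r)) := ih _
      _ = n2 ((X - C a) * ((S.map tf).prod * r)) := by ring_nf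
      _ = n2 (tf a * ((S.map tf).prod * r)) := tf_swap a _
      _ = n2 (tf a * (S.map tf).prod * r) := by ring_nf

/-- Mahler measure of a complex polynomial. -/
noncomputable def mah (p : Polynomial ℂ) : ℝ :=
  ‖p.leadingCoeff‖ * ((p.roots.map fun z => max 1 ‖z‖).prod)

lemma mah_def (p : Polynomial ℂ) :
    mah p = ‖p.leadingCoeff‖ * ((p.roots.map fun z => max 1 ‖z‖).prod) := rfl

lemma norm_mprod (s : Multiset ℂ) : ‖s.prod‖ = (s.map fun z => ‖z‖).prod := by
  induction s using Multiset.induction_on with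
  | empty => simp
  | cons a s ih => simp [norm_mul, ih]

lemma one_le_prod_max (s : Multiset ℂ) : 1 ≤ (s.map fun z => max 1 ‖z‖).prod := by
  induction s using Multiset.induction_on with
  | empty => simp
  | cons a s ih =>
    rw [Multiset.map_cons, Multiset.prod_cons]
    nlinarith [le_max_left 1 ‖a‖]

lemma prod_max_nonneg (s : Multiset ℂ) : 0 ≤ (s.map fun z => max 1 ‖z‖).prod :=
  zero_le_one.trans (one_le_prod_max s)

lemma mah_nonneg (p : Polynomial ℂ) : 0 ≤ mah p :=
  mul_nonneg (norm_nonneg _) (prod_max_nonneg _)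

lemma leadingCoeff_norm_le_mah (p : Polynomial ℂ) : ‖p.leadingCoeff‖ ≤ mah p := by
  have := one_le_prod_max p.roots
  have h := norm_nonneg p.leadingCoeff
  unfold mah; nlinarith

lemma one_le_mah {p : Polynomial ℂ} (h : 1 ≤ ‖p.leadingCoeff‖) : 1 ≤ mah p :=
  h.trans (leadingCoeff_norm_le_mah p)

lemma mah_mul {p q : Polynomial ℂ} (hp : p ≠ 0) (hq : q ≠ 0) :
    mah (p * q) = mah p * mah q := by
  unfold mah
  rw [leadingCoeff_mul, norm_mul, roots_mul (mul_ne_zero hp hq), Multiset.map_add,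
    Multiset.prod_add]
  ring

/-- Landau's inequality. -/
lemma landau (p : Polynomial ℂ) (hp : p ≠ 0) : mah p ^ 2 ≤ n2 p := by
  have hsp : Multiset.card p.roots = p.natDegree :=
    splits_iff_card_roots.mp (IsAlgClosed.splits p)
  have hfact : C p.leadingCoeff * (p.roots.map fun z => X - C z).prod = p :=
    C_leadingCoeff_mul_prod_multiset_X_sub_C hsp
  set q : Polynomial ℂ := (p.roots.map tf).prod * C p.leadingCoeff with hq
  have hq0 : q ≠ 0 := by
    apply mul_ne_zero
    · exact Multiset.prod_ne_zero (by
        intro h0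
        obtain ⟨z, _, hz⟩ := Multiset.mem_map.mp h0
        exact tf_ne_zero z hz)
    · simpa using leadingCoeff_ne_zero.mpr hp
  have hn2 : n2 q = n2 p := by
    rw [hq, ← prod_tf_n2, mul_comm, hfact]
  have hlc : ‖q.leadingCoeff‖ = mah p := by
    rw [hq, leadingCoeff_mul, leadingCoeff_multiset_prod, leadingCoeff_C, norm_mul,
      Multiset.map_map, mul_comm]
    unfold mah
    congr 1
    rw [norm_mprod, Multiset.map_map]
    exact congrArg Multiset.prod (Multiset.map_congr rfl fun z _ => tf_leadingCoeff_norm z)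
  have hterm : ‖q.leadingCoeff‖ ^ 2 ≤ n2 q := by
    rw [n2_eq_range q (le_refl _), leadingCoeff]
    refine Finset.single_le_sum (f := fun i => ‖q.coeff i‖ ^ 2) (fun i _ => sq_nonneg _) ?_
    simp
  rw [← hlc, ← hn2]
  exact hterm

lemma prod_norm_le_prod_max (t : Multiset ℂ) :
    (t.map fun z => ‖z‖).prod ≤ (t.map fun z => max 1 ‖z‖).prod := by
  induction t using Multiset.induction_on with
  | empty => simp
  | cons a t ih =>
    rw [Multiset.map_cons, Multiset.prod_cons, Multiset.map_cons, Multiset.prod_cons]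
    have h1 : (0:ℝ) ≤ (t.map fun z => ‖z‖).prod := by
      rw [← norm_mprod]; exact norm_nonneg _
    exact mul_le_mul (le_max_right _ _) ih h1 ((norm_nonneg a).trans (le_max_right 1 ‖a‖))

lemma prod_max_mono {t s : Multiset ℂ} (h : t ≤ s) :
    (t.map fun z => max 1 ‖z‖).prod ≤ (s.map fun z => max 1 ‖z‖).prod := by
  have hs : t + (s - t) = s := by rw [add_comm]; exact tsub_add_cancel_of_le h
  calc (t.map fun z => max 1 ‖z‖).prod
      = (t.map fun z => max 1 ‖z‖).prod * 1 := (mul_one _).symm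
    _ ≤ (t.map fun z => max 1 ‖z‖).prod * ((s - t).map fun z => max 1 ‖z‖).prod :=
        mul_le_mul_of_nonneg_left (one_le_prod_max _) (prod_max_nonneg _)
    _ = (s.map fun z => max 1 ‖z‖).prod := by
        conv_rhs => rw [← hs]
        rw [Multiset.map_add, Multiset.prod_add]

lemma esymm_norm_le (s : Multiset ℂ) (k : ℕ) :
    ‖s.esymm k‖ ≤ ((Multiset.card s).choose k : ℝ) * (s.map fun z => max 1 ‖z‖).prod := by
  unfold Multiset.esymm
  calc ‖((s.powersetCard k).map Multiset.prod).sum‖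
      ≤ (((s.powersetCard k).map Multiset.prod).map norm).sum := norm_multiset_sum_le _
    _ = ((s.powersetCard k).map fun t => ‖t.prod‖).sum := by rw [Multiset.map_map]; rfl
    _ ≤ ((s.powersetCard k).map fun _ => (s.map fun z => max 1 ‖z‖).prod).sum := by
        refine Multiset.sum_map_le_sum_map _ _ ?_
        intro t ht
        have hts : t ≤ s := (Multiset.mem_powersetCard.mp ht).1
        rw [norm_mprod]
        exact (prod_norm_le_prod_max t).trans (prod_max_mono hts)
    _ = ((Multiset.card s).choose k : ℝ) * (s.map fun z => max 1 ‖z‖).prod := by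
        rw [Multiset.map_const', Multiset.sum_replicate, Multiset.card_powersetCard]
        simp [nsmul_eq_mul]

/-- coefficient bound via Mahler measure -/
lemma coeff_norm_le (p : Polynomial ℂ) (hp : p ≠ 0) (i : ℕ) :
    ‖p.coeff i‖ ≤ (p.natDegree.choose i : ℝ) * mah p := by
  by_cases hi : i ≤ p.natDegree
  case neg =>
    rw [p.coeff_eq_zero_of_natDegree_lt (by omega), norm_zero]
    exact mul_nonneg (by positivity) (mah_nonneg p)
  have hsp : Multiset.card p.roots = p.natDegree :=
    splits_iff_card_roots.mp (IsAlgClosed.splits p)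
  have hfact : C p.leadingCoeff * (p.roots.map fun z => X - C z).prod = p :=
    C_leadingCoeff_mul_prod_multiset_X_sub_C hsp
  have hcoeff : p.coeff i = p.leadingCoeff *
      ((-1) ^ (Multiset.card p.roots - i) * p.roots.esymm (Multiset.card p.roots - i)) := by
    conv_lhs => rw [← hfact]
    rw [coeff_C_mul, Multiset.prod_X_sub_C_coeff p.roots (by omega)]
  rw [hcoeff, norm_mul, norm_mul, norm_pow, norm_neg, norm_one, one_pow, one_mul]
  have h1 := esymm_norm_le p.roots (Multiset.card p.roots - i)
  have h2 : ((Multiset.card p.roots).choose (Multiset.card p.roots - i) : ℝ)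
      = (p.natDegree.choose i : ℝ) := by
    rw [hsp, Nat.choose_symm hi]
  rw [hsp] at h1 h2 ⊢
  refine le_trans (mul_le_mul_of_nonneg_left h1 (norm_nonneg _)) ?_
  exact le_of_eq (by rw [h2, mah_def]; ring)

lemma choose_le_two_pow (n i : ℕ) : n.choose i ≤ 2 ^ n := by
  by_cases h : i ≤ n
  · calc n.choose i ≤ ∑ m ∈ Finset.range (n + 1), n.choose m :=
        Finset.single_le_sum (fun _ _ => Nat.zero_le _) (Finset.mem_range.2 (by omega))
      _ = 2 ^ n := Nat.sum_range_choose n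
  · rw [Nat.choose_eq_zero_of_lt (by omega)]; exact Nat.zero_le _

theorem statement_8 (g gstar : Polynomial ℤ) (d lam : ℕ)
    (hg : g ≠ 0) (hdeg : g.natDegree ≤ d)
    (hcoeff : ∀ i, |g.coeff i| ≤ 2 ^ lam)
    -- `gstar` is a squarefree part of `g`:
    (hprim : gstar.IsPrimitive)
    (hsqfree : Squarefree (gstar.map (Int.castRingHom ℂ)))
    (hsameroots : ∀ z : ℂ, Polynomial.aeval z gstar = 0 ↔ Polynomial.aeval z g = 0) :
    gstar.natDegree ≤ d ∧
    ∀ i, (|gstar.coeff i| : ℝ) ≤ 2 ^ (d + lam) * Real.sqrt (d + 1) := by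
  have hstar0 : gstar ≠ 0 := hprim.ne_zero
  set ι : ℤ →+* ℂ := Int.castRingHom ℂ with hι
  have hinj : Function.Injective ι := Int.cast_injective
  set G : Polynomial ℂ := gstar.map ι with hG
  set gC : Polynomial ℂ := g.map ι with hgC
  have hG0 : G ≠ 0 := (Polynomial.map_ne_zero_iff hinj).mpr hstar0
  have hgC0 : gC ≠ 0 := (Polynomial.map_ne_zero_iff hinj).mpr hg
  have haeval : ∀ (q : Polynomial ℤ) (z : ℂ), aeval z q = eval z (q.map ι) := by
    intro q z
    rw [aeval_def, eval_map]
    rfl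
  -- G divides gC
  have hsep : G.Separable := PerfectField.separable_iff_squarefree.mpr hsqfree
  have hnodup : G.roots.Nodup := Polynomial.nodup_roots hsep
  have hsub : G.roots ⊆ gC.roots := by
    intro z hz
    rw [mem_roots hgC0]
    rw [mem_roots hG0] at hz
    rw [IsRoot, ← haeval]
    rw [← hsameroots]
    rw [haeval]
    exact hz
  have hle : G.roots ≤ gC.roots := (Multiset.le_iff_subset hnodup).mpr hsub
  have hdvdC : G ∣ gC :=
    (IsAlgClosed.splits G).dvd_of_roots_le_roots hG0 hle
  -- descend to ℚ then ℤ
  have hcomp : ∀ q : Polynomial ℤ,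
      (q.map (algebraMap ℤ ℚ)).map (algebraMap ℚ ℂ) = q.map ι := by
    intro q
    rw [Polynomial.map_map]
    congr 1
  have hdvdQ : gstar.map (algebraMap ℤ ℚ) ∣ g.map (algebraMap ℤ ℚ) := by
    rw [← map_dvd_map' (algebraMap ℚ ℂ), hcomp, hcomp]
    exact hdvdC
  have hdvdQ' : gstar.map (algebraMap ℤ ℚ) ∣ g.primPart.map (algebraMap ℤ ℚ) := by
    have hc0' : g.content ≠ 0 := fun hcon => hg (Polynomial.content_eq_zero_iff.mp hcon)
    have hc0 : (g.content : ℚ) ≠ 0 := by exact_mod_cast hc0'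
    have heq : g.map (algebraMap ℤ ℚ) =
        C (g.content : ℚ) * g.primPart.map (algebraMap ℤ ℚ) := by
      conv_lhs => rw [g.eq_C_content_mul_primPart]
      rw [Polynomial.map_mul, map_C]
      rfl
    have : g.primPart.map (algebraMap ℤ ℚ) = C (g.content : ℚ)⁻¹ * g.map (algebraMap ℤ ℚ) := by
      rw [heq, ← mul_assoc, ← C_mul, inv_mul_cancel₀ hc0, C_1, one_mul]
    rw [this]
    exact hdvdQ.mul_left _
  have hdvd : gstar ∣ g :=
    (hprim.dvd_of_fraction_map_dvd_fraction_map (K := ℚ) hdvdQ').trans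
      g.primPart_dvd
  have hdegstar : gstar.natDegree ≤ d := (natDegree_le_of_dvd hdvd hg).trans hdeg
  refine ⟨hdegstar, ?_⟩
  -- Mahler measure bounds
  obtain ⟨h, hh⟩ := hdvd
  have hh0 : h ≠ 0 := fun h0 => hg (by rw [hh, h0, mul_zero])
  have hH0 : h.map ι ≠ 0 := (Polynomial.map_ne_zero_iff hinj).mpr hh0
  have hgCsplit : gC = G * h.map ι := by rw [hgC, hh, Polynomial.map_mul]
  have hmul : mah gC = mah G * mah (h.map ι) := by rw [hgCsplit, mah_mul hG0 hH0]
  have hnormint : ∀ (q : Polynomial ℤ) (i : ℕ), ‖(q.map ι).coeff i‖ = |(q.coeff i : ℝ)| := by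
    intro q i
    rw [coeff_map]
    simp [hι, Complex.norm_intCast]
  have hHlc : (1:ℝ) ≤ ‖(h.map ι).leadingCoeff‖ := by
    have : (h.map ι).leadingCoeff = (h.map ι).coeff (h.map ι).natDegree := rfl
    rw [this, hnormint]
    have hl : h.coeff (h.map ι).natDegree ≠ 0 := by
      have hnd : (h.map ι).natDegree = h.natDegree := natDegree_map_eq_of_injective hinj h
      rw [hnd]
      exact leadingCoeff_ne_zero.mpr hh0
    exact_mod_cast Int.one_le_abs hl
  have hmahH : (1:ℝ) ≤ mah (h.map ι) := hHlc.trans (leadingCoeff_norm_le_mah _)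
  have hmahle : mah G ≤ mah gC := by nlinarith [mah_nonneg G]
  -- n2 bound
  have hn2 : n2 gC ≤ (d + 1 : ℝ) * (2 ^ lam) ^ 2 := by
    rw [n2_eq_range gC (N := d + 1) (by
      have : gC.natDegree ≤ g.natDegree := natDegree_map_le
      omega)]
    have hterm : ∀ i, ‖gC.coeff i‖ ^ 2 ≤ ((2:ℝ) ^ lam) ^ 2 := by
      intro i
      have h1 : ‖gC.coeff i‖ ≤ (2:ℝ) ^ lam := by
        rw [hgC, hnormint]
        have := hcoeff i
        calc |(g.coeff i : ℝ)| = ((|g.coeff i| : ℤ) : ℝ) := by rw [Int.cast_abs]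
          _ ≤ ((2 ^ lam : ℤ) : ℝ) := by exact_mod_cast this
          _ = (2:ℝ) ^ lam := by push_cast; ring
      exact pow_le_pow_left₀ (norm_nonneg _) h1 2
    calc ∑ i ∈ Finset.range (d + 1), ‖gC.coeff i‖ ^ 2
        ≤ ∑ _i ∈ Finset.range (d + 1), ((2:ℝ) ^ lam) ^ 2 :=
          Finset.sum_le_sum fun i _ => hterm i
      _ = (d + 1 : ℝ) * (2 ^ lam) ^ 2 := by
          rw [Finset.sum_const, Finset.card_range]; push_cast; ring
  have hmahgC : mah gC ≤ 2 ^ lam * Real.sqrt (d + 1) := by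
    have h2 := (landau gC hgC0).trans hn2
    have hrhs : (0:ℝ) ≤ 2 ^ lam * Real.sqrt (d + 1) := by positivity
    nlinarith [mah_nonneg gC, Real.sq_sqrt (show (0:ℝ) ≤ (d:ℝ) + 1 by positivity),
      Real.sqrt_nonneg ((d:ℝ) + 1)]
  -- final
  intro i
  have hcb := coeff_norm_le G hG0 i
  have hGnd : G.natDegree ≤ d := by
    rw [hG]
    exact natDegree_map_le.trans hdegstar
  have hch : ((G.natDegree.choose i : ℕ) : ℝ) ≤ 2 ^ d := by
    have := (choose_le_two_pow G.natDegree i).trans (Nat.pow_le_pow_right (by norm_num) hGnd)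
    exact_mod_cast this
  have hmahG : mah G ≤ 2 ^ lam * Real.sqrt (d + 1) := hmahle.trans hmahgC
  have : (|gstar.coeff i| : ℝ) = ‖G.coeff i‖ := by
    rw [hG, hnormint]
  rw [this]
  calc ‖G.coeff i‖ ≤ (G.natDegree.choose i : ℝ) * mah G := hcb
    _ ≤ 2 ^ d * (2 ^ lam * Real.sqrt (d + 1)) := by
        refine mul_le_mul hch hmahG (mah_nonneg G) (by positivity)
    _ = 2 ^ (d + lam) * Real.sqrt (d + 1) := by rw [pow_add]; ring
end

section
/- Let f, g ∈ (ℤ[y₁,…,y_k])[x] with deg_x(f) = p ≥ q = deg_x(g) ≥ 1, deg_{y_i}(f) ≤ p and deg_{y_i}(g) ≤ q for every i ∈ {1,…,k}, and suppose every integer coefficient of f is at most 2^τ in absolute value and every integer coefficient of g is at most 2^σ in absolute value. Then every integer coefficient of the resultant Res_x(f,g) ∈ ℤ[y₁,…,y_k] is at most (p+q)! · (p+1)^{kq} · (q+1)^{kp} · 2^{qτ + pσ} in absolute value. -/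
/-!
STATEMENT 10: For `f, g ∈ (ℤ[y₁,…,y_k])[x]` with `deg_x f = p ≥ q = deg_x g ≥ 1`,
`deg_{y_i} f ≤ p`, `deg_{y_i} g ≤ q`, integer coefficients of `f` bounded by `2^τ`
and of `g` by `2^σ` in absolute value, every integer coefficient of `Res_x(f,g)`
is at most `(p+q)! · (p+1)^{kq} · (q+1)^{kp} · 2^{qτ+pσ}` in absolute value.
-/

open Polynomial

open MvPolynomial Finset in
lemma support_card_le {k d : ℕ} (h : MvPolynomial (Fin k) ℤ)
    (hd : ∀ i, MvPolynomial.degreeOf i h ≤ d) : h.support.card ≤ (d + 1) ^ k := by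
  classical
  set D : Fin k →₀ ℕ := Finsupp.equivFunOnFinite.symm (fun _ => d) with hD
  have hsub : h.support ⊆ Finset.Iic D := by
    intro m hm
    rw [Finset.mem_Iic, Finsupp.le_def]
    intro i
    exact (MvPolynomial.monomial_le_degreeOf i hm).trans (hd i)
  have hcard : (Finset.Iic D).card ≤ (d + 1) ^ k := by
    rw [Finsupp.card_Iic]
    calc ∏ i ∈ D.support, (Finset.Iic (D i)).card
        ≤ ∏ _i ∈ D.support, (d + 1) := by
          apply Finset.prod_le_prod (fun _ _ => Nat.zero_le _)
          intro i _
          simp [hD, Nat.card_Iic]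
      _ = (d + 1) ^ D.support.card := by rw [Finset.prod_const]
      _ ≤ (d + 1) ^ k := Nat.pow_le_pow_right (Nat.succ_le_succ (Nat.zero_le _))
          ((Finset.card_le_univ _).trans (by simp))
  exact (Finset.card_le_card hsub).trans hcard

open MvPolynomial Finset in
lemma coeff_prod_bound {k : ℕ} {ι : Type*} [DecidableEq ι] (s : Finset ι)
    (h : ι → MvPolynomial (Fin k) ℤ) (d : ι → ℕ) (C : ι → ℤ)
    (hd : ∀ i ∈ s, ∀ v, MvPolynomial.degreeOf v (h i) ≤ d i)
    (hC : ∀ i ∈ s, ∀ m, |MvPolynomial.coeff m (h i)| ≤ C i) :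
    ∀ m, |MvPolynomial.coeff m (∏ i ∈ s, h i)| ≤ ∏ i ∈ s, (((d i : ℤ) + 1) ^ k * C i) := by
  classical
  revert hd hC
  induction s using Finset.induction with
  | empty =>
      intro _ _ m
      simp only [Finset.prod_empty, MvPolynomial.coeff_one]
      split <;> simp
  | @insert a s ha ih =>
      intro hd hC m
      have hBnn : (0 : ℤ) ≤ ∏ i ∈ s, (((d i : ℤ) + 1) ^ k * C i) := by
        apply Finset.prod_nonneg
        intro i hi
        have hCi : 0 ≤ C i := le_trans (abs_nonneg _) (hC i (Finset.mem_insert_of_mem hi) 0)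
        positivity
      have hCa : 0 ≤ C a := le_trans (abs_nonneg _) (hC a (Finset.mem_insert_self a s) 0)
      rw [Finset.prod_insert ha, MvPolynomial.coeff_mul]
      set B := ∏ i ∈ s, (((d i : ℤ) + 1) ^ k * C i) with hB
      have ih' := ih (fun i hi => hd i (Finset.mem_insert_of_mem hi))
        (fun i hi => hC i (Finset.mem_insert_of_mem hi))
      calc |∑ x ∈ Finset.HasAntidiagonal.antidiagonal m, MvPolynomial.coeff x.1 (h a) *
              MvPolynomial.coeff x.2 (∏ i ∈ s, h i)|
          ≤ ∑ x ∈ Finset.HasAntidiagonal.antidiagonal m, |MvPolynomial.coeff x.1 (h a) *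
              MvPolynomial.coeff x.2 (∏ i ∈ s, h i)| := Finset.abs_sum_le_sum_abs _ _
        _ = ∑ x ∈ (Finset.HasAntidiagonal.antidiagonal m).filter (fun x => x.1 ∈ (h a).support),
              |MvPolynomial.coeff x.1 (h a) * MvPolynomial.coeff x.2 (∏ i ∈ s, h i)| := by
            rw [Finset.sum_filter_of_ne]
            intro x _ hx
            by_contra hmem
            rw [MvPolynomial.notMem_support_iff] at hmem
            exact hx (by rw [hmem, zero_mul, abs_zero])
        _ ≤ ∑ _x ∈ (Finset.HasAntidiagonal.antidiagonal m).filter (fun x => x.1 ∈ (h a).support),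
              (C a * B) := by
            apply Finset.sum_le_sum
            intro x hx
            rw [abs_mul]
            exact mul_le_mul (hC a (Finset.mem_insert_self a s) x.1) (ih' x.2)
              (abs_nonneg _) hCa
        _ = ((Finset.HasAntidiagonal.antidiagonal m).filter (fun x => x.1 ∈ (h a).support)).card •
              (C a * B) := (Finset.sum_const _)
        _ ≤ ((d a + 1) ^ k : ℕ) • (C a * B) := by
            apply nsmul_le_nsmul_left (mul_nonneg hCa hBnn)
            refine le_trans ?_ (support_card_le (h a)
              (hd a (Finset.mem_insert_self a s)))
            apply Finset.card_le_card_of_injOn (fun x => x.1)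
            · intro x hx
              exact (Finset.mem_filter.mp hx).2
            · intro x hx y hy hxy
              have hxy' : x.1 = y.1 := hxy
              have hx1 := Finset.HasAntidiagonal.mem_antidiagonal.mp (Finset.mem_filter.mp hx).1
              have hy1 := Finset.HasAntidiagonal.mem_antidiagonal.mp (Finset.mem_filter.mp hy).1
              have : x.2 = y.2 := by
                have := hx1.trans hy1.symm
                rw [hxy'] at this
                exact add_left_cancel this
              exact Prod.ext hxy' this
        _ = ((d a : ℤ) + 1) ^ k * C a * B := by
            rw [nsmul_eq_mul]
            push_cast
            ring
        _ = ∏ i ∈ insert a s, (((d i : ℤ) + 1) ^ k * C i) := by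
            rw [Finset.prod_insert ha, hB]


theorem statement_10 (k p q τ σ : ℕ)
    (f g : Polynomial (MvPolynomial (Fin k) ℤ))
    (hp : f.natDegree = p) (hq : g.natDegree = q) (hpq : q ≤ p) (hq1 : 1 ≤ q)
    (hfdeg : ∀ (j : ℕ) (i : Fin k), MvPolynomial.degreeOf i (f.coeff j) ≤ p)
    (hgdeg : ∀ (j : ℕ) (i : Fin k), MvPolynomial.degreeOf i (g.coeff j) ≤ q)
    (hfcoeff : ∀ (j : ℕ) (m : Fin k →₀ ℕ), |MvPolynomial.coeff m (f.coeff j)| ≤ 2 ^ τ)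
    (hgcoeff : ∀ (j : ℕ) (m : Fin k →₀ ℕ), |MvPolynomial.coeff m (g.coeff j)| ≤ 2 ^ σ) :
    ∀ m : Fin k →₀ ℕ,
      |MvPolynomial.coeff m (_root_.resultant f g)| ≤
        (Nat.factorial (p + q) : ℤ) * (p + 1) ^ (k * q) * (q + 1) ^ (k * p) *
          2 ^ (q * τ + p * σ) := by
  classical
  intro m
  subst hp; subst hq
  set A : ℤ := ((f.natDegree : ℤ) + 1) ^ k * 2 ^ τ with hA
  set B : ℤ := ((g.natDegree : ℤ) + 1) ^ k * 2 ^ σ with hBdef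
  set n := g.natDegree + f.natDegree with hn
  -- per-permutation product bound
  have hperm : ∀ σ' : Equiv.Perm (Fin n),
      |MvPolynomial.coeff m (∏ j : Fin n, sylvesterMatrix f g (σ' j) j)| ≤
        A ^ g.natDegree * B ^ f.natDegree := by
    intro σ'
    have hb := coeff_prod_bound (Finset.univ : Finset (Fin n))
      (fun j => sylvesterMatrix f g (σ' j) j)
      (fun j => if ((σ' j : Fin n) : ℕ) < g.natDegree then f.natDegree else g.natDegree)
      (fun j => if ((σ' j : Fin n) : ℕ) < g.natDegree then (2:ℤ) ^ τ else (2:ℤ) ^ σ)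
      (by
        intro j _ v
        simp only [sylvesterMatrix]
        split_ifs with h1 h2 h3
        · exact hfdeg _ v
        · simp
        · exact hgdeg _ v
        · simp)
      (by
        intro j _ m'
        simp only [sylvesterMatrix]
        split_ifs with h1 h2 h3
        · exact hfcoeff _ m'
        · simp
        · exact hgcoeff _ m'
        · simp) m
    refine hb.trans (le_of_eq ?_)
    have hre := Equiv.prod_comp σ' (fun i : Fin n =>
      (((if (i : ℕ) < g.natDegree then f.natDegree else g.natDegree : ℕ) : ℤ) + 1) ^ k *
        (if (i : ℕ) < g.natDegree then (2:ℤ) ^ τ else (2:ℤ) ^ σ))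
    rw [hre]
    rw [Fin.prod_univ_eq_prod_range
      (fun i => (((if i < g.natDegree then f.natDegree else g.natDegree : ℕ) : ℤ) + 1) ^ k *
        (if i < g.natDegree then (2:ℤ) ^ τ else (2:ℤ) ^ σ)) n]
    rw [hn, Finset.prod_range_add]
    congr 1
    · rw [Finset.prod_congr rfl (fun i hi => ?_), Finset.prod_const, Finset.card_range, hA]
      rw [if_pos (Finset.mem_range.mp hi), if_pos (Finset.mem_range.mp hi)]
    · rw [Finset.prod_congr rfl (fun i _ => ?_), Finset.prod_const, Finset.card_range, hBdef]
      rw [if_neg (by omega), if_neg (by omega)]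
  -- expand the determinant
  rw [_root_.resultant, Matrix.det_apply, MvPolynomial.coeff_sum]
  have habs : ∀ σ' : Equiv.Perm (Fin n),
      |MvPolynomial.coeff m (Equiv.Perm.sign σ' • ∏ j, sylvesterMatrix f g (σ' j) j)| =
      |MvPolynomial.coeff m (∏ j, sylvesterMatrix f g (σ' j) j)| := by
    intro σ'
    rcases Int.units_eq_one_or (Equiv.Perm.sign σ') with hs | hs <;>
      rw [Units.smul_def, hs] <;>
      simp [MvPolynomial.coeff_smul]
  calc |∑ σ' : Equiv.Perm (Fin n),
          MvPolynomial.coeff m (Equiv.Perm.sign σ' • ∏ j, sylvesterMatrix f g (σ' j) j)|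
      ≤ ∑ σ' : Equiv.Perm (Fin n),
          |MvPolynomial.coeff m (Equiv.Perm.sign σ' • ∏ j, sylvesterMatrix f g (σ' j) j)| :=
        Finset.abs_sum_le_sum_abs _ _
    _ ≤ ∑ _σ' : Equiv.Perm (Fin n), A ^ g.natDegree * B ^ f.natDegree := by
        apply Finset.sum_le_sum
        intro σ' _
        rw [habs σ']
        exact hperm σ'
    _ = (Nat.factorial n : ℤ) * (A ^ g.natDegree * B ^ f.natDegree) := by
        rw [Finset.sum_const, Finset.card_univ, Fintype.card_perm, Fintype.card_fin,
          nsmul_eq_mul]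
    _ = (Nat.factorial (f.natDegree + g.natDegree) : ℤ) *
          ((f.natDegree : ℤ) + 1) ^ (k * g.natDegree) *
          ((g.natDegree : ℤ) + 1) ^ (k * f.natDegree) *
          2 ^ (g.natDegree * τ + f.natDegree * σ) := by
        rw [hn, Nat.add_comm g.natDegree f.natDegree, hA, hBdef]
        rw [mul_pow, mul_pow, ← pow_mul, ← pow_mul, ← pow_mul, ← pow_mul, pow_add]
        ring
    _ ≤ _ := by apply le_of_eq; ring
end
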